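/- For k ≥ 2, the graph obtained from Δ^L_{k,1} by removing vertex a_2 and all incident edges has diameter three: the distance from c to b_2 is 3. -/

import Mathlib

inductive V (k n : ℕ) where
  | c : V k n
  | a : Fin k → V k n
  | b : Fin (k + n) → V k n
deriving DecidableEq, Fintype

def adj (k n : ℕ) : V k n → V k n → Prop
  | .a i, .a j => i ≠ j
  | .b i, .b j => i ≠ j
  | .a i, .b j => (j : ℕ) = (i : ℕ) ∨ (j : ℕ) = k + i
  | .b j, .a i => (j : ℕ) = (i : ℕ) ∨ (j : ℕ) = k + i
  | .c, .a _ => True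
  | .a _, .c => True
  | _, _ => False

instance (k n : ℕ) : DecidableRel (adj k n) := fun x y => by
  cases x <;> cases y <;> simp only [adj] <;> infer_instance

def DeltaL (k n : ℕ) : SimpleGraph (V k n) where
  Adj := adj k n
  symm := by
    constructor
    intro x y h
    cases x <;> cases y <;> simp_all [adj] <;> tauto
  loopless := by
    constructor
    intro x h
    cases x <;> simp_all [adj]

/-! The surviving edge `a_p b_p` (`p ≠ m`) dominates `Δ^L_{k,n} - a_m`: `c` and the other `a`'s are
adjacent to `a_p`, the other `b`'s to `b_p`. So any two vertices are joined through `a_p` or `b_p`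
by a walk of length at most 3. On the other hand the neighbours of `c` are the surviving `a_i`,
while `b_m` is adjacent to no `a_i` with `i ≠ m`, so `c` and `b_m` are at distance at least 3. -/

namespace SimpleGraph

variable {W : Type*} {G : SimpleGraph W}

theorem edist_le_three_of_adj_of_dominating {x y : W} (hxy : G.Adj x y)
    (hdom : ∀ v, G.edist v x ≤ 1 ∨ G.edist v y ≤ 1) (u v : W) : G.edist u v ≤ 3 := by
  have hx_y : G.edist x y ≤ 1 := (edist_eq_one_iff_adj.mpr hxy).le
  have hy_x : G.edist y x ≤ 1 := (edist_eq_one_iff_adj.mpr hxy.symm).le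
  have hfar : ∀ w, G.edist x w ≤ 2 ∧ G.edist y w ≤ 2 := by
    intro w
    rw [edist_comm (u := x), edist_comm (u := y)]
    rcases hdom w with hw | hw
    · exact ⟨hw.trans (by norm_num), (G.edist_triangle.trans (add_le_add hw hx_y)).trans
        (by norm_num)⟩
    · exact ⟨(G.edist_triangle.trans (add_le_add hw hy_x)).trans (by norm_num),
        hw.trans (by norm_num)⟩
  rcases hdom u with hu | hu
  · calc G.edist u v ≤ G.edist u x + G.edist x v := G.edist_triangle
      _ ≤ 1 + 2 := add_le_add hu (hfar v).1
      _ = 3 := by norm_num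
  · calc G.edist u v ≤ G.edist u y + G.edist y v := G.edist_triangle
      _ ≤ 1 + 2 := add_le_add hu (hfar v).2
      _ = 3 := by norm_num

end SimpleGraph

@[simp]
theorem deltaL_adj {k n : ℕ} {x y : V k n} : (DeltaL k n).Adj x y ↔ adj k n x y := Iff.rfl

/-- Vertices are indexed from 0, so the paper's `a₂` and `b₂` are `V.a 1` and `V.b 1`. -/
abbrev deleteA (k n : ℕ) (m : Fin k) : SimpleGraph {x : V k n | x ≠ V.a m} :=
  (DeltaL k n).induce {x | x ≠ V.a m}

section deleteA

open SimpleGraph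

variable {k n : ℕ} {m : Fin k}

theorem deleteA_edist_le_three (hk : 2 ≤ k) (u v : {x : V k n | x ≠ V.a m}) :
    (deleteA k n m).edist u v ≤ 3 := by
  have : Nontrivial (Fin k) := Fin.nontrivial_iff_two_le.mpr hk
  obtain ⟨p, hp⟩ := exists_ne m
  refine edist_le_three_of_adj_of_dominating (x := ⟨V.a p, by simpa using hp⟩)
    (y := ⟨V.b (Fin.castAdd n p), by simp⟩) (by simp [adj]) ?_ u v
  rintro ⟨v, hv⟩
  simp only [edist_le_one_iff_adj_or_eq, induce_adj, deltaL_adj, Subtype.mk.injEq]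
  cases v <;> simp [adj, Fin.ext_iff] at hv ⊢ <;> omega

theorem deleteA_edist_c_b (hk : 2 ≤ k) :
    (deleteA k n m).edist ⟨V.c, by simp⟩ ⟨V.b (Fin.castAdd n m), by simp⟩ = 3 := by
  refine le_antisymm (deleteA_edist_le_three hk _ _) ?_
  suffices h : 2 < (deleteA k n m).edist ⟨V.c, by simp⟩ ⟨V.b (Fin.castAdd n m), by simp⟩ from
    Order.add_one_le_of_lt h
  refine two_lt_edist_iff.mpr ⟨by simp, by simp [adj], ?_⟩
  refine Set.eq_empty_of_forall_notMem fun ⟨w, hw⟩ hcommon => ?_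
  rw [mem_commonNeighbors] at hcommon
  have := m.isLt
  cases w <;> simp [adj, Fin.ext_iff] at hw hcommon
  omega

end deleteA

theorem stmt18 (k : ℕ) (hk : 2 ≤ k) :
    (((DeltaL k 1).induce {x : V k 1 | x ≠ V.a ⟨1, by omega⟩}).dist
        ⟨V.c, by simp⟩ ⟨V.b ⟨1, by omega⟩, by simp⟩ = 3) ∧
    (∀ u v : {x : V k 1 | x ≠ V.a ⟨1, by omega⟩},
      ((DeltaL k 1).induce {x : V k 1 | x ≠ V.a ⟨1, by omega⟩}).dist u v ≤ 3) := by
  refine ⟨?_, fun u v => ?_⟩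
  · exact congrArg ENat.toNat (deleteA_edist_c_b (m := ⟨1, by omega⟩) hk)
  · exact ENat.toNat_le_of_le_natCast (deleteA_edist_le_three hk u v)
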